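/- Let p = {p_n}_{n=0}^∞ be a sequence of real numbers that is TN_2, with generating function p(x) = Σ_{n≥0} p_n x^n. Then for all integers A > B ≥ 0 and all t ∈ ℕ, the polynomial (p^{A+1}(x)|_t)(p^B(x)|_t) is coefficient-wise dominated by (p^A(x)|_t)(p^{B+1}(x)|_t). -/

import Mathlib

open Finset

noncomputable section

/-- The ℕ×ℕ Toeplitz matrix of a sequence `p`, with `(T_p)_{i,j} = p_{j-i}`
(and `0` when `j < i`, i.e. `p_n = 0` for negative `n`). -/
def toeplitz (p : ℕ → ℝ) : Matrix ℕ ℕ ℝ :=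
  fun i j => if i ≤ j then p (j - i) else 0

/-- A matrix is totally non-negative of order `k` iff every minor of size at
most `k` (rows and columns chosen strictly increasingly) is non-negative. -/
def IsTN (k : ℕ) (M : Matrix ℕ ℕ ℝ) : Prop :=
  ∀ l : ℕ, l ≤ k → ∀ r c : Fin l → ℕ, StrictMono r → StrictMono c →
    0 ≤ (M.submatrix r c).det

/-- A matrix is totally positive of order `k` iff every minor of size at
most `k` is positive. -/
def IsTP (k : ℕ) (M : Matrix ℕ ℕ ℝ) : Prop :=
  ∀ l : ℕ, l ≤ k → ∀ r c : Fin l → ℕ, StrictMono r → StrictMono c →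
    0 < (M.submatrix r c).det

/-- The matrix `S_p` with `(S_p)_{i,j} = (p^i)_j`, the coefficient of `x^j` in
`p(x)^i` where `p(x) = Σ p_n x^n` (and `p(x)^0 = 1`). -/
def sMatrix (p : ℕ → ℝ) : Matrix ℕ ℕ ℝ :=
  fun i j => PowerSeries.coeff j (PowerSeries.mk p ^ i)

/-- A partition: a non-increasing function from the positive integers to ℕ with
finite support (we set the irrelevant value at `0` to be `0`). -/
structure PartitionSeq where
  part : ℕ → ℕ
  zero : part 0 = 0
  antitone : ∀ ⦃i j : ℕ⦄, 1 ≤ i → i ≤ j → part j ≤ part i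
  finSupp : (Function.support part).Finite

/-- The weight `|λ|` of a partition. -/
def PartitionSeq.weight (lam : PartitionSeq) : ℕ := ∑ᶠ i, lam.part i

/-- `λ` dominates `μ`: equal weights and partial sums of `λ` are at least
those of `μ`. -/
def PartitionSeq.Dominates (lam mu : PartitionSeq) : Prop :=
  lam.weight = mu.weight ∧
  ∀ j : ℕ, 1 ≤ j →
    ∑ i ∈ Finset.Icc 1 j, mu.part i ≤ ∑ i ∈ Finset.Icc 1 j, lam.part i

/-- `f(λ, p(x), t, x) = ∏_i (p(x)^{λ(i)} |_t)`, the product over rows of the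
truncations to degree `t` of powers of the generating function. -/
def fPoly (lam : PartitionSeq) (p : ℕ → ℝ) (t : ℕ) : Polynomial ℝ :=
  ∏ᶠ i : ℕ, PowerSeries.trunc (t + 1) (PowerSeries.mk p ^ lam.part i)

/-- `P(E(λ,X,j,t))` for `X` with probability mass function `p`: the coefficient
of `x^j` in `∏_i ((p_X(x))^{λ(i)} |_t)`. -/
def probE (p : ℕ → ℝ) (lam : PartitionSeq) (j t : ℕ) : ℝ :=
  (fPoly lam p t).coeff j

/-- Condition `C(λ,μ,X)`: `P(E(λ,X,j,t)) ≤ P(E(μ,X,j,t))` for all `j, t ∈ ℕ`. -/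
def CondC (p : ℕ → ℝ) (lam mu : PartitionSeq) : Prop :=
  ∀ j t : ℕ, probE p lam j t ≤ probE p mu j t

/-!
Let `u = p^A` and `v = p^B`. The ratio `coeff k u / coeff k v` is non-decreasing in `k`: this
holds for the pair `(1, p^{A-B})`, and multiplying both series by `p` preserves it because, by a
Cauchy–Binet expansion, each `2 × 2` minor of the products is a sum of products of a minor of the
pair with a `2 × 2` minor of `T_p`, grouped so that both factors have the same sign.
Expanding `p^{A+1} = u · p` along the coefficients `p_i ≥ 0`, the `i`-th term shifts `u` by `i`
and truncates it at degree `t - i` instead of `t`; on the right `v` is shifted in the same way.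
So it suffices that truncating the factor with the heavier tail more strongly gives smaller
coefficients, `trunc_s u · trunc_n v ⊑ trunc_n u · trunc_s v` for `s ≤ n`, which follows by
pairing the terms `(k, l)` and `(l, k)` of each antidiagonal.
-/

open PowerSeries
open scoped PowerSeries

theorem IsTN.entry_nonneg {k : ℕ} {M : Matrix ℕ ℕ ℝ} (hM : IsTN k M) (hk : 1 ≤ k) (i j : ℕ) :
    0 ≤ M i j := by
  have := hM 1 hk ![i] ![j] (Subsingleton.strictMono _) (Subsingleton.strictMono _)
  rwa [Matrix.det_fin_one] at this

theorem IsTN.toeplitz_nonneg {k : ℕ} {p : ℕ → ℝ} (hp : IsTN k (toeplitz p)) (hk : 1 ≤ k)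
    (n : ℕ) : 0 ≤ p n := by
  simpa [toeplitz] using hp.entry_nonneg hk 0 n

theorem IsTN.mul_le_mul_of_le {k : ℕ} {M : Matrix ℕ ℕ ℝ} (hM : IsTN k M) (hk : 2 ≤ k)
    {i₁ i₂ j₁ j₂ : ℕ} (hi : i₁ ≤ i₂) (hj : j₁ ≤ j₂) :
    M i₁ j₂ * M i₂ j₁ ≤ M i₁ j₁ * M i₂ j₂ := by
  obtain rfl | hi := hi.eq_or_lt
  · rw [mul_comm]
  obtain rfl | hj := hj.eq_or_lt
  · rw [mul_comm]
  have h2 : ∀ {a b : ℕ}, a < b → StrictMono ![a, b] := fun hab =>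
    Fin.strictMono_iff_lt_succ.2 fun i => by fin_cases i; simpa using hab
  have := hM 2 hk ![i₁, i₂] ![j₁, j₂] (h2 hi) (h2 hj)
  simp only [Matrix.det_fin_two, Matrix.submatrix_apply] at this
  simpa [sub_nonneg] using this

theorem Finset.sum_nonneg_of_add_swap_nonneg {α M : Type*} [AddCommGroup M] [LinearOrder M]
    [IsOrderedAddMonoid M] {s : Finset (α × α)} (hs : ∀ z ∈ s, z.swap ∈ s) {f : α × α → M}
    (hf : ∀ z ∈ s, 0 ≤ f z + f z.swap) : 0 ≤ ∑ z ∈ s, f z := by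
  have hswap : ∑ z ∈ s, f z.swap = ∑ z ∈ s, f z :=
    Finset.sum_nbij' Prod.swap Prod.swap hs hs (fun _ _ => rfl) (fun _ _ => rfl) fun _ _ => rfl
  have := Finset.sum_nonneg hf
  rw [Finset.sum_add_distrib, hswap] at this
  exact nonneg_add_self_iff.1 this

theorem PowerSeries.coeff_pow_nonneg {R : Type*} [CommSemiring R] [PartialOrder R]
    [IsOrderedRing R] {f : R⟦X⟧} (hf : ∀ n, 0 ≤ coeff n f) (k n : ℕ) :
    0 ≤ coeff n (f ^ k) := by
  induction k generalizing n with
  | zero => rw [pow_zero, coeff_one]; split_ifs <;> simp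
  | succ k ih =>
    rw [pow_succ, coeff_mul]
    exact Finset.sum_nonneg fun x _ => mul_nonneg (ih _) (hf _)

/-- The `2 × ℕ` matrix with rows the coefficients of `f` and `g` has non-negative `2 × 2` minors;
for positive coefficients this says that `coeff k g / coeff k f` is non-decreasing in `k`. -/
def PowerSeries.RatioMonotone (f g : ℝ⟦X⟧) : Prop :=
  ∀ ⦃l k : ℕ⦄, l ≤ k → coeff k f * coeff l g ≤ coeff l f * coeff k g

theorem PowerSeries.coeff_mul_mk_eq_sum_toeplitz (f : ℝ⟦X⟧) (p : ℕ → ℝ) {k N : ℕ} (hk : k < N) :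
    coeff k (f * mk p) = ∑ x ∈ range N, coeff x f * toeplitz p x k := by
  rw [coeff_mul, Nat.sum_antidiagonal_eq_sum_range_succ_mk,
    ← Finset.sum_subset (range_subset_range.2 hk)]
  · refine Finset.sum_congr rfl fun x hx => ?_
    rw [toeplitz, if_pos (Nat.lt_succ_iff.1 (mem_range.1 hx)), coeff_mk]
  · intro x _ hx
    rw [mem_range, Nat.lt_succ_iff, not_le] at hx
    rw [toeplitz, if_neg hx.not_ge, mul_zero]

theorem PowerSeries.RatioMonotone.mul_mk {f g : ℝ⟦X⟧} (hfg : RatioMonotone f g) {p : ℕ → ℝ}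
    (hp : IsTN 2 (toeplitz p)) : RatioMonotone (f * mk p) (g * mk p) := by
  intro l k hlk
  rw [← sub_nonneg]
  simp only [coeff_mul_mk_eq_sum_toeplitz _ p (Nat.lt_succ_of_le hlk),
    coeff_mul_mk_eq_sum_toeplitz _ p (Nat.lt_succ_self k), Finset.sum_mul_sum,
    ← Finset.sum_sub_distrib, ← Finset.sum_product']
  refine Finset.sum_nonneg_of_add_swap_nonneg
    (fun z hz => Finset.mem_product.2 (Finset.mem_product.1 hz).symm) fun ⟨x, y⟩ _ => ?_
  -- the pair `(x, y), (y, x)` contributes a product of two minors of the same sign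
  rcases le_total x y with hxy | hxy <;>
  · simp only [Prod.swap_prod_mk]
    nlinarith [mul_nonneg (sub_nonneg.2 (hfg hxy))
      (sub_nonneg.2 (hp.mul_le_mul_of_le le_rfl hxy hlk))]

theorem PowerSeries.ratioMonotone_one {g : ℝ⟦X⟧} (hg : ∀ n, 0 ≤ coeff n g) :
    RatioMonotone 1 g := by
  intro l k hlk
  rcases Nat.eq_zero_or_pos k with rfl | hk
  · rw [Nat.le_zero.1 hlk]
  · rw [coeff_one, if_neg hk.ne', zero_mul]
    exact mul_nonneg (by rw [coeff_one]; split_ifs <;> norm_num) (hg k)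

theorem PowerSeries.ratioMonotone_mk_pow {p : ℕ → ℝ} (hp : IsTN 2 (toeplitz p)) {B A : ℕ}
    (hBA : B ≤ A) :
    RatioMonotone (mk p ^ B) (mk p ^ A) := by
  obtain ⟨d, rfl⟩ := Nat.exists_eq_add_of_le hBA
  induction B with
  | zero =>
    rw [pow_zero, zero_add]
    exact ratioMonotone_one
      (coeff_pow_nonneg (fun n => by simpa using hp.toeplitz_nonneg one_le_two n) d)
  | succ B ih =>
    rw [Nat.add_right_comm, pow_succ, pow_succ]
    exact (ih (Nat.le_add_right _ _)).mul_mk hp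

theorem PowerSeries.trunc_X_pow_mul {R : Type*} [CommSemiring R] (n i : ℕ) (f : R⟦X⟧) :
    trunc n (X ^ i * f) = Polynomial.X ^ i * trunc (n - i) f := by
  ext d
  rw [coeff_trunc, coeff_X_pow_mul', Polynomial.coeff_X_pow_mul', coeff_trunc]
  split_ifs <;> first | rfl | omega

theorem PowerSeries.trunc_mul_eq_sum {R : Type*} [CommSemiring R] (n : ℕ) (f g : R⟦X⟧) :
    trunc n (f * g) =
      ∑ i ∈ range n, Polynomial.C (coeff i g) * (Polynomial.X ^ i * trunc (n - i) f) := by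
  ext d
  simp only [Polynomial.finsetSum_coeff, Polynomial.coeff_C_mul, ← trunc_X_pow_mul,
    coeff_trunc, coeff_X_pow_mul']
  split_ifs with hd
  · rw [coeff_mul, ← Nat.sum_antidiagonal_swap]
    simp only [Prod.fst_swap, Prod.snd_swap, mul_ite, mul_zero]
    rw [Nat.sum_antidiagonal_eq_sum_range_succ (fun i j => coeff j f * coeff i g), ← sum_filter]
    have hfilter : {a ∈ range n | a ≤ d} = range (d + 1) := by
      ext a
      simp only [mem_filter, mem_range]
      omega
    rw [hfilter]
    exact Finset.sum_congr rfl fun _ _ => mul_comm _ _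
  · simp

theorem PowerSeries.RatioMonotone.coeff_trunc_mul_trunc_le {f g : ℝ⟦X⟧} (hgf : RatioMonotone g f)
    {s n : ℕ} (hsn : s ≤ n) (m : ℕ) :
    (trunc s f * trunc n g).coeff m ≤ (trunc n f * trunc s g).coeff m := by
  rw [← sub_nonneg, Polynomial.coeff_mul, Polynomial.coeff_mul, ← sum_sub_distrib]
  refine sum_nonneg_of_add_swap_nonneg (fun _ hz => HasAntidiagonal.swap_mem_antidiagonal.2 hz)
    fun ⟨k, l⟩ _ => ?_
  simp only [coeff_trunc, Prod.swap_prod_mk]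
  rcases le_total l k with h | h <;>
  · have := hgf h
    split_ifs <;> first | omega | linarith

theorem PowerSeries.RatioMonotone.coeff_trunc_mul_mul_trunc_le {f g : ℝ⟦X⟧}
    (hgf : RatioMonotone g f) {q : ℝ⟦X⟧} (hq : ∀ i, 0 ≤ coeff i q) (n j : ℕ) :
    (trunc n (f * q) * trunc n g).coeff j ≤ (trunc n f * trunc n (g * q)).coeff j := by
  rw [trunc_mul_eq_sum n f q, trunc_mul_eq_sum n g q, sum_mul, mul_sum,
    Polynomial.finsetSum_coeff, Polynomial.finsetSum_coeff]
  refine sum_le_sum fun i _ => ?_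
  rw [mul_assoc, mul_assoc, mul_left_comm (trunc n f), mul_left_comm (trunc n f),
    Polynomial.coeff_C_mul, Polynomial.coeff_C_mul,
    Polynomial.coeff_X_pow_mul', Polynomial.coeff_X_pow_mul']
  gcongr
  · exact hq i
  split_ifs
  · exact hgf.coeff_trunc_mul_trunc_le (Nat.sub_le n i) _
  · rfl

/-- **Truncated domination.** If `p ∈ TN₂` then for all `A > B ≥ 0` and all
`t ∈ ℕ`, `(p^{A+1}(x)|_t)(p^B(x)|_t) ⊑ (p^A(x)|_t)(p^{B+1}(x)|_t)`
coefficient-wise. -/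
theorem trunc_power_domination (p : ℕ → ℝ) (hTN : IsTN 2 (toeplitz p))
    (A B : ℕ) (hBA : B < A) (t j : ℕ) :
    ((PowerSeries.mk p ^ (A + 1)).trunc (t + 1) *
        (PowerSeries.mk p ^ B).trunc (t + 1)).coeff j ≤
      ((PowerSeries.mk p ^ A).trunc (t + 1) *
        (PowerSeries.mk p ^ (B + 1)).trunc (t + 1)).coeff j := by
  have hp : ∀ n, 0 ≤ coeff n (mk p) := fun n => by
    simpa using hTN.toeplitz_nonneg one_le_two n
  rw [pow_succ, pow_succ]
  exact (ratioMonotone_mk_pow hTN hBA.le).coeff_trunc_mul_mul_trunc_le hp _ _
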